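/- Let b be a prime, let m ≥ 1, s ≥ 1 and t be integers with 0 ≤ t ≤ m, and let C_1, …, C_s be infinite matrices over 𝔽_b generating a digital (t,s)-sequence, in the sense that for every integer m' with max(t,1) ≤ m' ≤ m, the upper-left m'×m' submatrices satisfy ρ_{m'}(C_1^{(m')},…,C_s^{(m')}) ≥ m' − t. Let 0 = w_1^r ≤ ⋯ ≤ w_s^r and 0 = w_1^c ≤ ⋯ ≤ w_s^c be nonnegative integers and let C̃_1, …, C̃_s be the m×m matrices obtained from C_1^{(m)},…,C_s^{(m)} by setting, for each j, the last min(m, w_j^r) rows and the last min(m, w_j^c) columns to zero. Then ρ_m(C̃_1,…,C̃_s) ≥ max{0, m − max{w_s^c + t, w_s^r}}. -/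

import Mathlib

open scoped BigOperators

/-- Linear independence of the system consisting of the first `d j` rows of each matrix `C j`. -/
def rowsLinIndep (b m : ℕ) {ι : Type*} (C : ι → Matrix (Fin m) (Fin m) (ZMod b))
    (d : ι → ℕ) : Prop :=
  LinearIndependent (ZMod b)
    (fun p : {p : ι × Fin m // (p.2 : ℕ) < d p.1} => C p.1.1 p.1.2)

/-- The linear independence parameter `ρ_m(C_1,…,C_s)`: the largest `d ∈ {0,…,m}` such that
for every choice of nonnegative integers `d_j` summing to `d`, the collection of the first `d_j`
rows of the matrices is linearly independent. -/
noncomputable def rho (b m : ℕ) {ι : Type*} [Fintype ι]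
    (C : ι → Matrix (Fin m) (Fin m) (ZMod b)) : ℕ :=
  sSup {d | d ≤ m ∧ ∀ dv : ι → ℕ, (∑ j, dv j) = d → rowsLinIndep b m C dv}

/-- Row reduced matrix: the last `min m w` rows are set to zero. -/
def rowReduced {b m : ℕ} (C : Matrix (Fin m) (Fin m) (ZMod b)) (w : ℕ) :
    Matrix (Fin m) (Fin m) (ZMod b) :=
  Matrix.of fun i r => if (i : ℕ) < m - min m w then C i r else 0

/-- Column-row reduced matrix: the last `min m w` rows and columns are set to zero. -/
def colRowReduced {b m : ℕ} (C : Matrix (Fin m) (Fin m) (ZMod b)) (w : ℕ) :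
    Matrix (Fin m) (Fin m) (ZMod b) :=
  Matrix.of fun i r => if (i : ℕ) < m - min m w ∧ (r : ℕ) < m - min m w then C i r else 0

/-- Reduced matrix with possibly different row/column reduction indices. -/
def colRowReduced' {b m : ℕ} (C : Matrix (Fin m) (Fin m) (ZMod b)) (wr wc : ℕ) :
    Matrix (Fin m) (Fin m) (ZMod b) :=
  Matrix.of fun i r => if (i : ℕ) < m - min m wr ∧ (r : ℕ) < m - min m wc then C i r else 0

/-- Upper-left `m × m` submatrix of an infinite matrix. -/
def upperLeft {b : ℕ} (C : Matrix ℕ ℕ (ZMod b)) (m : ℕ) : Matrix (Fin m) (Fin m) (ZMod b) :=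
  Matrix.of fun i r => C (i : ℕ) (r : ℕ)

/-- The `k`-th coordinate value produced by the digital method with generating matrix `C`. -/
noncomputable def digitalPoint (b m : ℕ) (C : Matrix (Fin m) (Fin m) (ZMod b)) (k : ℕ) : ℝ :=
  ∑ i : Fin m,
    ((C.mulVec fun r : Fin m => ((k / b ^ (r : ℕ)) % b : ZMod b)) i).val
      / (b : ℝ) ^ ((i : ℕ) + 1)

open Classical in
/-- The `b^m` points `P 0, …, P (b^m - 1)` form a `(t,m,|ι|)`-net in base `b` (counted with
multiplicity): every elementary interval of volume `b^(t-m)` contains exactly `b^t` points. -/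
def isNet (b m t : ℕ) {ι : Type*} [Fintype ι] (P : ℕ → ι → ℝ) : Prop :=
  ∀ d a : ι → ℕ, (∀ j, a j < b ^ d j) → (∑ j, d j) = m - t →
    ((Finset.range (b ^ m)).filter fun k =>
        ∀ j, (a j : ℝ) / (b : ℝ) ^ d j ≤ P k j ∧ P k j < ((a j : ℝ) + 1) / (b : ℝ) ^ d j).card
      = b ^ t

/-!
If every row reduction is at most `Wr` and every column reduction at most `Wc`, then, restricted
to the first `m - Wc` columns, the first `m - max (Wc + t) Wr` rows of the reduced matrices are
rows of the upper-left `(m - Wc) × (m - Wc)` blocks of the `C_j`, whose linear independence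
parameter is at least `m - Wc - t` by the sequence property. Rows that are independent after
deleting columns were independent to begin with.
-/

section RowsLinIndep

variable {b m : ℕ} {ι : Type*}

theorem rowsLinIndep.mono {C : ι → Matrix (Fin m) (Fin m) (ZMod b)} {dv dv' : ι → ℕ}
    (h : rowsLinIndep b m C dv') (hdv : dv ≤ dv') : rowsLinIndep b m C dv :=
  h.comp _ (Subtype.impEmbedding _ _ fun p hp => hp.trans_le (hdv p.1)).injective

theorem rowsLinIndep_congr {C C' : ι → Matrix (Fin m) (Fin m) (ZMod b)} {dv : ι → ℕ}
    (hCC' : ∀ j (i : Fin m), (i : ℕ) < dv j → C j i = C' j i) :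
    rowsLinIndep b m C dv ↔ rowsLinIndep b m C' dv := by
  unfold rowsLinIndep
  rw [show (fun p : {p : ι × Fin m // (p.2 : ℕ) < dv p.1} => C p.1.1 p.1.2) =
      fun p => C' p.1.1 p.1.2 from funext fun p => hCC' _ _ p.2]

theorem rowsLinIndep.of_submatrix_castLE {m' : ℕ} (hm' : m' ≤ m)
    {C : ι → Matrix (Fin m) (Fin m) (ZMod b)} {dv : ι → ℕ} (hdv : ∀ j, dv j ≤ m')
    (h : rowsLinIndep b m' (fun j => (C j).submatrix (Fin.castLE hm') (Fin.castLE hm')) dv) :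
    rowsLinIndep b m C dv := by
  let e : {p : ι × Fin m // (p.2 : ℕ) < dv p.1} → {p : ι × Fin m' // (p.2 : ℕ) < dv p.1} :=
    fun p => ⟨(p.1.1, ⟨p.1.2, p.2.trans_le (hdv _)⟩), p.2⟩
  have he : Function.Injective e := fun p q hpq => by
    simp only [e, Subtype.mk.injEq, Prod.mk.injEq, Fin.mk.injEq] at hpq
    exact Subtype.ext (Prod.ext hpq.1 (Fin.ext hpq.2))
  exact .of_comp (LinearMap.funLeft (ZMod b) (ZMod b) (Fin.castLE hm')) (h.comp e he)

end RowsLinIndep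

section Rho

variable {b m : ℕ} {ι : Type*} [Fintype ι] {C : ι → Matrix (Fin m) (Fin m) (ZMod b)}

theorem le_rho {d : ℕ} (hdm : d ≤ m)
    (h : ∀ dv : ι → ℕ, ∑ j, dv j = d → rowsLinIndep b m C dv) : d ≤ rho b m C :=
  le_csSup ⟨m, fun _ hd => hd.1⟩ ⟨hdm, h⟩

theorem rowsLinIndep_of_sum_eq_rho {dv : ι → ℕ} (hdv : ∑ j, dv j = rho b m C) :
    rowsLinIndep b m C dv := by
  have hzero : (0 : ℕ) ∈ {d | d ≤ m ∧ ∀ dv : ι → ℕ, ∑ j, dv j = d → rowsLinIndep b m C dv} := by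
    refine ⟨Nat.zero_le _, fun dv hdv => ?_⟩
    have : IsEmpty {p : ι × Fin m // (p.2 : ℕ) < dv p.1} :=
      ⟨fun p => by simpa [Finset.sum_eq_zero_iff.1 hdv p.1.1] using p.2⟩
    exact linearIndependent_empty_type
  exact (Nat.sSup_mem ⟨0, hzero⟩ ⟨m, fun _ hd => hd.1⟩).2 dv hdv

theorem rowsLinIndep_of_sum_le_rho [Nonempty ι] {dv : ι → ℕ} (hdv : ∑ j, dv j ≤ rho b m C) :
    rowsLinIndep b m C dv := by
  classical
  obtain ⟨j₀⟩ := ‹Nonempty ι›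
  let pad := dv + Pi.single j₀ (rho b m C - ∑ j, dv j)
  have hpad : ∑ j, pad j = rho b m C := by
    simp only [pad, Pi.add_apply, Finset.sum_add_distrib, Finset.sum_pi_single', Finset.mem_univ,
      if_true]
    omega
  exact (rowsLinIndep_of_sum_eq_rho hpad).mono fun j => Nat.le_add_right _ _

end Rho

theorem sub_max_le_rho_colRowReduced' {b m t : ℕ} {ι : Type*} [Fintype ι] [Nonempty ι]
    (C : ι → Matrix ℕ ℕ (ZMod b)) (wr wc : ι → ℕ) {Wr Wc : ℕ}
    (hwr : ∀ j, wr j ≤ Wr) (hwc : ∀ j, wc j ≤ Wc)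
    (hrho : m - Wc - t ≤ rho b (m - Wc) (fun j => upperLeft (C j) (m - Wc))) :
    m - max (Wc + t) Wr ≤
      rho b m (fun j => colRowReduced' (upperLeft (C j) m) (wr j) (wc j)) := by
  refine le_rho (Nat.sub_le _ _) fun dv hdv => ?_
  have hdv_le : ∀ j, dv j ≤ m - max (Wc + t) Wr := fun j =>
    hdv ▸ Finset.single_le_sum (fun _ _ => Nat.zero_le _) (Finset.mem_univ j)
  refine .of_submatrix_castLE (Nat.sub_le m Wc) (fun j => by grind) ?_
  refine (rowsLinIndep_congr (C := fun j => upperLeft (C j) (m - Wc)) fun j i hi => ?_).1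
    (rowsLinIndep_of_sum_le_rho (by omega))
  ext r
  have := hdv_le j; have := hwr j; have := hwc j; have := r.isLt
  simp only [upperLeft, colRowReduced', Matrix.submatrix_apply, Matrix.of_apply, Fin.val_castLE]
  rw [if_pos (by omega)]

/-- lower bound with different row and column reduction indices:
`ρ_m(C̃_1,…,C̃_s) ≥ max{0, m − max{w_s^c + t, w_s^r}}`. -/
theorem rho_colRowReduced'_ge (b m s t : ℕ) (hs : 1 ≤ s)
    (C : Fin s → Matrix ℕ ℕ (ZMod b))
    (hseq : ∀ m', max t 1 ≤ m' → m' ≤ m →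
      m' - t ≤ rho b m' (fun j => upperLeft (C j) m'))
    (wr wc : Fin s → ℕ)
    (hwrmono : Monotone wr)
    (hwcmono : Monotone wc) :
    max 0 (m - max (wc ⟨s - 1, by omega⟩ + t) (wr ⟨s - 1, by omega⟩)) ≤
      rho b m (fun j => colRowReduced' (upperLeft (C j) m) (wr j) (wc j)) := by
  have : Nonempty (Fin s) := ⟨⟨0, hs⟩⟩
  have hlast (j : Fin s) : j ≤ ⟨s - 1, by omega⟩ := Fin.le_def.2 (by grind)
  rw [Nat.zero_max]
  by_cases hD : m ≤ max (wc ⟨s - 1, by omega⟩ + t) (wr ⟨s - 1, by omega⟩)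
  · simp [Nat.sub_eq_zero_of_le hD]
  exact sub_max_le_rho_colRowReduced' C wr wc (fun j => hwrmono (hlast j))
    (fun j => hwcmono (hlast j)) (hseq _ (by omega) (Nat.sub_le _ _))
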